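/- Let V be a vector space over ℂ, D : V → V linear, n a positive integer, J ∈ ℂ with J ≠ 0, N a positive integer, and set λ := −(2N+1)/2. If (φ_l)_{l≥0} in V (with φ_{−1} := 0) satisfies the decoupled recurrence for all l ≥ 1, then the obstruction identity holds: Π_{j=1}^N ((n/(2J))·D² − j²·id_V) φ_0 = 0, i.e. the composition of the operators (n/(2J))D² − j² for j = 1, …, N annihilates φ_0. -/

import Mathlib

/-- The decoupled recurrence: for every `l ≥ 1`,
`2l(2λ+2l+1)·φ_l = (D² + ((2λ+2l−1)(n+2l−2)/(2n))·J + (2l(2λ+n+2l−1)/(2n))·J)·φ_{l−1}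
  − ((2λ+n+2l−3)(n+2l−2)/(4n²))·J²·φ_{l−2}`, with `φ_{−1} := 0`. -/
def DecoupledRec {V : Type*} [AddCommGroup V] [Module ℂ V] (D : V →ₗ[ℂ] V)
    (n : ℕ) (J lam : ℂ) (φ : ℕ → V) : Prop :=
  ∀ l : ℕ, 1 ≤ l →
    (2 * (l : ℂ) * (2 * lam + 2 * (l : ℂ) + 1)) • φ l
      = D (D (φ (l - 1)))
        + ((2 * lam + 2 * (l : ℂ) - 1) * ((n : ℂ) + 2 * (l : ℂ) - 2) / (2 * (n : ℂ)) * J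
            + 2 * (l : ℂ) * (2 * lam + (n : ℂ) + 2 * (l : ℂ) - 1) / (2 * (n : ℂ)) * J)
            • φ (l - 1)
        - ((2 * lam + (n : ℂ) + 2 * (l : ℂ) - 3) * ((n : ℂ) + 2 * (l : ℂ) - 2)
            / (4 * (n : ℂ) ^ 2) * J ^ 2) • (if 2 ≤ l then φ (l - 2) else 0)

/-!
Put `T = (n/(2J))·D²` and `ψ_l = (2J/n)^{-l} φ_l`. At `λ = -(2N+1)/2` the recurrence becomes
`4l(l-N) ψ_l = (T + α_l) ψ_{l-1} - β_l ψ_{l-2}`. On the vectors `v_k = ∏_{j=1}^k (T - j²) ψ_0`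
the operator `T` acts as a ladder, `T v_k = v_{k+1} + (k+1)² v_k`, and for `l < N` one finds
`ψ_l = ∑_{k ≤ l} b_{l,k} v_k` with explicit coefficients `b_{l,k}`, a factor depending on `k` times
a step-two rising factorial in `l - k`. At `l = N` the left-hand side vanishes, the coefficients
of `v_0, …, v_{N-1}` on the right cancel exactly as for `l < N`, and what is left is
`b_{N-1,N-1} v_N = 0` with `b_{N-1,N-1} ≠ 0`.
-/

open Finset

noncomputable section

def prodSubSquares (R : Type*) [CommRing R] {A : Type*} [Ring A] [Algebra R A] (a : A)
    (k : ℕ) : A :=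
  ((List.range k).map fun j : ℕ => a - ((j : R) + 1) ^ 2 • (1 : A)).prod

section ProdSubSquares

variable {R A : Type*} [CommRing R] [Ring A] [Algebra R A]

theorem prodSubSquares_zero (a : A) : prodSubSquares R a 0 = 1 := by
  simp [prodSubSquares]

theorem prodSubSquares_succ (a : A) (k : ℕ) :
    prodSubSquares R a (k + 1) = prodSubSquares R a k * (a - ((k : R) + 1) ^ 2 • 1) := by
  simp [prodSubSquares, List.range_succ]

theorem commute_prodSubSquares (a : A) (k : ℕ) : Commute a (prodSubSquares R a k) :=
  Commute.list_prod_right _ _ fun _ hx => by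
    obtain ⟨j, -, rfl⟩ := List.mem_map.1 hx
    exact (Commute.refl a).sub_right ((Commute.one_right a).smul_right _)

theorem mul_prodSubSquares (a : A) (k : ℕ) :
    a * prodSubSquares R a k
      = prodSubSquares R a (k + 1) + ((k : R) + 1) ^ 2 • prodSubSquares R a k := by
  rw [(commute_prodSubSquares a k).eq, prodSubSquares_succ, mul_sub, mul_smul_comm, mul_one,
    sub_add_cancel]

end ProdSubSquares

namespace CriticalRec

def lead (N l : ℕ) : ℂ := 4 * l * (l - N)

def mid (ν : ℂ) (N l : ℕ) : ℂ :=
  ((2 * l - 2 * N - 2) * (ν + 2 * l - 2) + 2 * l * (ν + 2 * l - 2 * N - 2)) / 4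

def low (ν : ℂ) (N l : ℕ) : ℂ := (ν + 2 * l - 2 * N - 4) * (ν + 2 * l - 2) / 16

theorem lead_ne_zero {N l : ℕ} (h₀ : l ≠ 0) (hN : l ≠ N) : lead N l ≠ 0 := by
  have : (l : ℂ) - N ≠ 0 := sub_ne_zero.2 (Nat.cast_injective.ne hN)
  unfold lead
  exact mul_ne_zero (mul_ne_zero (by norm_num) (Nat.cast_ne_zero.2 h₀)) this

theorem lead_self (N : ℕ) : lead N N = 0 := by simp [lead]

end CriticalRec

def CriticalRec {V : Type*} [AddCommGroup V] [Module ℂ V] (T : Module.End ℂ V) (ν : ℂ) (N : ℕ)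
    (ψ : ℕ → V) : Prop :=
  ∀ l : ℕ, 1 ≤ l →
    CriticalRec.lead N l • ψ l
      = T (ψ (l - 1)) + CriticalRec.mid ν N l • ψ (l - 1)
        - CriticalRec.low ν N l • (if 2 ≤ l then ψ (l - 2) else 0)

def diagCoeff (N k : ℕ) : ℂ := ∏ j ∈ range k, (4 * ((j : ℂ) + 1) * ((j : ℂ) + 1 - N))⁻¹

theorem diagCoeff_succ (N k : ℕ) :
    diagCoeff N (k + 1) = diagCoeff N k * (4 * ((k : ℂ) + 1) * ((k : ℂ) + 1 - N))⁻¹ :=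
  prod_range_succ _ _

theorem diagCoeff_ne_zero {N k : ℕ} (hk : k < N) : diagCoeff N k ≠ 0 := by
  refine prod_ne_zero_iff.2 fun j hj => inv_ne_zero ?_
  have hjN : (j : ℂ) + 1 - N ≠ 0 := by
    rw [sub_ne_zero]; exact_mod_cast (by simp at hj; omega : j + 1 ≠ N)
  exact mul_ne_zero (mul_ne_zero (by norm_num) (Nat.cast_add_one_ne_zero j)) hjN

def ascProdTwo (x : ℂ) (m : ℕ) : ℂ := ∏ i ∈ range m, (x + 2 * i)

theorem ascProdTwo_succ (x : ℂ) (m : ℕ) :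
    ascProdTwo x (m + 1) = ascProdTwo x m * (x + 2 * m) :=
  prod_range_succ _ _

theorem add_mul_ascProdTwo (x : ℂ) (m : ℕ) :
    (x + 2 * m) * ascProdTwo x m = x * ascProdTwo (x + 2) m := by
  rw [mul_comm, ← ascProdTwo_succ, ascProdTwo, prod_range_succ', ascProdTwo]
  simp only [Nat.cast_add, Nat.cast_one, Nat.cast_zero, mul_zero, add_zero, mul_comm x]
  congr 1
  exact prod_congr rfl fun i _ => by ring

/-- `basisCoeff ν N (l + 1) k` is the coefficient `b_{l,k}` of `v_k` in `ψ_l`; shifting the first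
index lets `basisCoeff ν N 0 = 0` play the role of `ψ_{-1} = 0`. -/
def basisCoeff (ν : ℂ) (N L k : ℕ) : ℂ :=
  if k < L then
    diagCoeff N k * ascProdTwo (ν + 2 * k + 2) (L - 1 - k)
      / (8 ^ (L - 1 - k) * (L - 1 - k).factorial)
  else 0

section basisCoeff

open CriticalRec

variable {ν : ℂ} {N : ℕ}

theorem basisCoeff_of_le {L k : ℕ} (h : L ≤ k) : basisCoeff ν N L k = 0 := if_neg (not_lt.2 h)

theorem basisCoeff_add_add_one (k m : ℕ) :
    basisCoeff ν N (k + m + 1) k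
      = diagCoeff N k * ascProdTwo (ν + 2 * k + 2) m / (8 ^ m * m.factorial) := by
  rw [basisCoeff, if_pos (by omega), show k + m + 1 - 1 - k = m by omega]

theorem basisCoeff_succ_self (k : ℕ) : basisCoeff ν N (k + 1) k = diagCoeff N k := by
  simpa [ascProdTwo] using basisCoeff_add_add_one (ν := ν) (N := N) k 0

theorem basisCoeff_one_zero : basisCoeff ν N 1 0 = 1 :=
  (basisCoeff_succ_self 0).trans (by simp [diagCoeff])

theorem add_mul_basisCoeff_eq_succ (L k : ℕ) :
    (ν + 2 * L) * basisCoeff ν N L k = 8 * ((L : ℂ) - k) * basisCoeff ν N (L + 1) k := by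
  rcases lt_trichotomy k L with hk | rfl | hk
  · obtain ⟨m, rfl⟩ := Nat.exists_eq_add_of_lt hk
    rw [basisCoeff_add_add_one, show k + m + 1 + 1 = k + (m + 1) + 1 by ring,
      basisCoeff_add_add_one, ascProdTwo_succ, Nat.factorial_succ]
    push_cast
    field_simp
    ring
  · simp [basisCoeff_of_le le_rfl]
  · simp [basisCoeff_of_le hk.le, basisCoeff_of_le (Nat.succ_le_of_lt hk)]

theorem add_mul_basisCoeff_eq_succ_succ {k : ℕ} (hk : k + 1 ≠ N) (L : ℕ) :
    (ν + 2 * L) * basisCoeff ν N L k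
      = 4 * ((k : ℂ) + 1) * ((k : ℂ) + 1 - N) * (ν + 2 * k + 2)
          * basisCoeff ν N (L + 1) (k + 1) := by
  rcases lt_or_ge k L with hkL | hkL
  · obtain ⟨m, rfl⟩ := Nat.exists_eq_add_of_lt hkL
    have hkN : (k : ℂ) + 1 - N ≠ 0 := by
      rw [sub_ne_zero]; exact_mod_cast hk
    rw [basisCoeff_add_add_one, show k + m + 1 + 1 = (k + 1) + m + 1 by ring,
      basisCoeff_add_add_one, diagCoeff_succ]
    have := add_mul_ascProdTwo (ν + 2 * k + 2) m
    push_cast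
    rw [show ν + 2 * ((k : ℂ) + 1) + 2 = ν + 2 * k + 2 + 2 by ring]
    have hm : (m.factorial : ℂ) ≠ 0 := Nat.cast_ne_zero.2 m.factorial_ne_zero
    field_simp
    linear_combination (diagCoeff N k) * this
  · rw [basisCoeff_of_le hkL, basisCoeff_of_le (by omega), mul_zero, mul_zero]

/-- Through `add_mul_basisCoeff_eq_succ` all three coefficients become multiples of
`basisCoeff ν N (l + 2) k`, and the recurrence reduces to a polynomial identity. -/
theorem basisCoeff_rec_mul (l k : ℕ) :
    (ν + 2 * l + 2) * (ν + 2 * l)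
        * (lead N (l + 1) * basisCoeff ν N (l + 2) k
          - (((k : ℂ) + 1) ^ 2 + mid ν N (l + 1)) * basisCoeff ν N (l + 1) k
          + low ν N (l + 1) * basisCoeff ν N l k)
      = (ν + 2 * l) * (4 * k * (k - N) * (ν + 2 * k)) * basisCoeff ν N (l + 2) k := by
  have h₁ := add_mul_basisCoeff_eq_succ (ν := ν) (N := N) (l + 1) k
  have h₀ := add_mul_basisCoeff_eq_succ (ν := ν) (N := N) l k
  push_cast at h₁
  linear_combination (norm := skip)
    (8 * ((l : ℂ) - k) * low ν N (l + 1) - (ν + 2 * l) * (((k : ℂ) + 1) ^ 2 + mid ν N (l + 1)))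
        * h₁
      + (ν + 2 * l + 2) * low ν N (l + 1) * h₀
  simp only [lead, mid, low]
  push_cast
  ring

theorem basisCoeff_rec_zero (hν : ∀ j : ℕ, ν + 2 * j ≠ 0) (l : ℕ) :
    lead N (l + 1) * basisCoeff ν N (l + 2) 0
      = (1 + mid ν N (l + 1)) * basisCoeff ν N (l + 1) 0
        - low ν N (l + 1) * basisCoeff ν N l 0 := by
  have hl : ν + 2 * l + 2 ≠ 0 := by simpa [mul_add, add_assoc] using hν (l + 1)
  have h := basisCoeff_rec_mul (ν := ν) (N := N) l 0
  simp only [Nat.cast_zero, mul_zero, zero_mul, zero_add, one_pow] at h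
  have := (mul_eq_zero.1 h).resolve_left (mul_ne_zero hl (hν l))
  linear_combination this

theorem basisCoeff_rec_succ (hν : ∀ j : ℕ, ν + 2 * j ≠ 0) {k : ℕ} (hk : k + 1 < N) (l : ℕ) :
    lead N (l + 1) * basisCoeff ν N (l + 2) (k + 1)
      = basisCoeff ν N (l + 1) k
        + (((k : ℂ) + 2) ^ 2 + mid ν N (l + 1)) * basisCoeff ν N (l + 1) (k + 1)
        - low ν N (l + 1) * basisCoeff ν N l (k + 1) := by
  have hl : ν + 2 * l + 2 ≠ 0 := by simpa [mul_add, add_assoc] using hν (l + 1)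
  have h := basisCoeff_rec_mul (ν := ν) (N := N) l (k + 1)
  have hb := add_mul_basisCoeff_eq_succ_succ (ν := ν) hk.ne (l + 1)
  push_cast at h hb
  refine mul_left_cancel₀ (mul_ne_zero hl (hν l)) ?_
  linear_combination h - (ν + 2 * l) * hb

end basisCoeff

section basisSum

open CriticalRec

variable {V : Type*} [AddCommGroup V] [Module ℂ V] {ν : ℂ} {N : ℕ}

def basisSum (ν : ℂ) (N : ℕ) (v : ℕ → V) (L : ℕ) : V :=
  ∑ k ∈ range N, basisCoeff ν N L k • v k

theorem basisSum_zero (v : ℕ → V) : basisSum ν N v 0 = 0 := by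
  simp [basisSum, basisCoeff_of_le]

theorem basisSum_one (hN : 0 < N) (v : ℕ → V) : basisSum ν N v 1 = v 0 := by
  rw [basisSum, sum_eq_single_of_mem 0 (mem_range.2 hN) fun k _ hk =>
    by rw [basisCoeff_of_le (by omega), zero_smul], basisCoeff_one_zero, one_smul]

/-- The last term is the obstruction: it survives at `l + 1 = N`, where `lead N N = 0`. -/
theorem basisSum_rec (hν : ∀ j : ℕ, ν + 2 * j ≠ 0) (hN : 0 < N) (T : Module.End ℂ V)
    (v : ℕ → V) (hv : ∀ k, T (v k) = v (k + 1) + ((k : ℂ) + 1) ^ 2 • v k) (l : ℕ) :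
    T (basisSum ν N v (l + 1)) + mid ν N (l + 1) • basisSum ν N v (l + 1)
        - low ν N (l + 1) • basisSum ν N v l
      = lead N (l + 1) • basisSum ν N v (l + 2) + basisCoeff ν N (l + 1) (N - 1) • v N := by
  obtain ⟨M, rfl⟩ : ∃ M, N = M + 1 := ⟨N - 1, by omega⟩
  simp only [basisSum, map_sum, map_smul, hv, smul_add, sum_add_distrib, smul_sum, smul_smul]
  rw [sum_range_succ (fun k => _ • v (k + 1)), sum_range_succ', sum_range_succ',
    sum_range_succ', sum_range_succ']
  have hsucc :
      ∑ k ∈ range M, (lead (M + 1) (l + 1) * basisCoeff ν (M + 1) (l + 2) (k + 1)) • v (k + 1)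
        = ∑ k ∈ range M, basisCoeff ν (M + 1) (l + 1) k • v (k + 1)
          + ∑ k ∈ range M,
              (basisCoeff ν (M + 1) (l + 1) (k + 1) * (((k + 1 : ℕ) : ℂ) + 1) ^ 2) • v (k + 1)
          + ∑ k ∈ range M,
              (mid ν (M + 1) (l + 1) * basisCoeff ν (M + 1) (l + 1) (k + 1)) • v (k + 1)
          - ∑ k ∈ range M,
              (low ν (M + 1) (l + 1) * basisCoeff ν (M + 1) l (k + 1)) • v (k + 1) := by
    simp only [← sum_add_distrib, ← sum_sub_distrib, ← add_smul, ← sub_smul]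
    refine sum_congr rfl fun k hk => ?_
    rw [basisCoeff_rec_succ hν (by simpa using hk)]
    congr 1
    push_cast
    ring
  rw [hsucc, basisCoeff_rec_zero hν, Nat.add_sub_cancel]
  module

end basisSum

namespace CriticalRec

variable {V : Type*} [AddCommGroup V] [Module ℂ V] {T : Module.End ℂ V} {ν : ℂ} {N : ℕ}
  {ψ v : ℕ → V}

theorem lead_smul_eq (h : CriticalRec T ν N ψ) (hν : ∀ j : ℕ, ν + 2 * j ≠ 0) (hN : 0 < N)
    (hv : ∀ k, T (v k) = v (k + 1) + ((k : ℂ) + 1) ^ 2 • v k) {l : ℕ}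
    (hψ : ∀ j ≤ l, ψ j = basisSum ν N v (j + 1)) :
    lead N (l + 1) • ψ (l + 1)
      = lead N (l + 1) • basisSum ν N v (l + 2) + basisCoeff ν N (l + 1) (N - 1) • v N := by
  rw [h (l + 1) (by omega), ← basisSum_rec hν hN T v hv l, Nat.add_sub_cancel, hψ l le_rfl]
  rcases l with _ | m
  · simp [basisSum_zero]
  · simp [hψ m (by omega)]

theorem eq_basisSum (h : CriticalRec T ν N ψ) (hν : ∀ j : ℕ, ν + 2 * j ≠ 0)
    (hv : ∀ k, T (v k) = v (k + 1) + ((k : ℂ) + 1) ^ 2 • v k) (hv₀ : v 0 = ψ 0) :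
    ∀ l < N, ψ l = basisSum ν N v (l + 1) := by
  intro l
  induction l using Nat.strong_induction_on with
  | _ l ih =>
    intro hl
    rcases l with _ | l
    · rw [basisSum_one hl, hv₀]
    · have := h.lead_smul_eq hν (by omega) hv (l := l) fun j hj => ih j (by omega) (by omega)
      rwa [basisCoeff_of_le (by omega : l + 1 ≤ N - 1), zero_smul, add_zero,
        smul_right_inj (lead_ne_zero (by omega) (by omega))] at this

theorem prodSubSquares_apply_eq_zero (h : CriticalRec T ν N ψ) (hν : ∀ j : ℕ, ν + 2 * j ≠ 0)
    (hN : 0 < N) : prodSubSquares ℂ T N (ψ 0) = 0 := by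
  set v : ℕ → V := fun k => prodSubSquares ℂ T k (ψ 0)
  have hv : ∀ k, T (v k) = v (k + 1) + ((k : ℂ) + 1) ^ 2 • v k := fun k => by
    simp only [v, ← Module.End.mul_apply, mul_prodSubSquares, LinearMap.add_apply,
      LinearMap.smul_apply]
  obtain ⟨M, rfl⟩ : ∃ M, N = M + 1 := ⟨N - 1, by omega⟩
  have := h.lead_smul_eq hν hN hv (l := M) fun j hj =>
    h.eq_basisSum hν hv (by simp [v, prodSubSquares_zero]) j (by omega)
  rw [lead_self, zero_smul, zero_smul, zero_add, Nat.add_sub_cancel,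
    basisCoeff_succ_self] at this
  exact (smul_eq_zero.1 this.symm).resolve_left (diagCoeff_ne_zero (by omega))

end CriticalRec

theorem DecoupledRec.criticalRec {V : Type*} [AddCommGroup V] [Module ℂ V] {D : V →ₗ[ℂ] V}
    {n N : ℕ} {J : ℂ} {φ ψ : ℕ → V} (h : DecoupledRec D n J (-(2 * (N : ℂ) + 1) / 2) φ)
    (hn : (n : ℂ) ≠ 0) (hJ : J ≠ 0) (hφ : ∀ l, φ l = (2 * J / n) ^ l • ψ l) :
    CriticalRec (((n : ℂ) / (2 * J)) • (D ∘ₗ D)) n N ψ := by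
  set T : Module.End ℂ V := ((n : ℂ) / (2 * J)) • (D ∘ₗ D)
  have hu : 2 * J / n ≠ 0 := div_ne_zero (mul_ne_zero two_ne_zero hJ) hn
  have hDD : ∀ x, D (D x) = (2 * J / n) • T x := fun x => by
    rw [LinearMap.smul_apply, smul_smul, div_mul_div_comm, mul_comm (2 * J),
      div_self (mul_ne_zero hn (mul_ne_zero two_ne_zero hJ)), one_smul]
    rfl
  intro l hl
  obtain ⟨m, rfl⟩ : ∃ m, l = m + 1 := ⟨l - 1, by omega⟩
  have hrec := h (m + 1) hl
  refine smul_right_injective V (pow_ne_zero (m + 1) hu) ?_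
  simp only [hφ, map_smul, hDD, Nat.add_sub_cancel] at hrec
  simp only [Nat.add_sub_cancel, CriticalRec.lead, CriticalRec.mid, CriticalRec.low]
  rcases m with _ | m
  · rw [if_neg (by omega)] at hrec ⊢
    linear_combination (norm := module) hrec
  · simp only [show 2 ≤ m + 1 + 1 by omega, if_true, show m + 1 + 1 - 2 = m by omega]
      at hrec ⊢
    linear_combination (norm := module) hrec

end

/-- The obstruction identity at `λ = −(2N+1)/2`: the composition of the operators
`(n/(2J))·D² − j²·id` for `j = 1, …, N` annihilates `φ_0`. -/
theorem stmt13 {V : Type*} [AddCommGroup V] [Module ℂ V] (D : V →ₗ[ℂ] V)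
    (n : ℕ) (hn : 0 < n) (J : ℂ) (hJ : J ≠ 0) (N : ℕ) (hN : 0 < N) (φ : ℕ → V)
    (h : DecoupledRec D n J (-(2 * (N : ℂ) + 1) / 2) φ) :
    ((List.range N).map (fun j =>
        ((n : ℂ) / (2 * J)) • (D ∘ₗ D : Module.End ℂ V)
          - ((j : ℂ) + 1) ^ 2 • (1 : Module.End ℂ V))).prod
      (φ 0) = 0 := by
  have hn' : (n : ℂ) ≠ 0 := Nat.cast_ne_zero.2 hn.ne'
  have hu : 2 * J / n ≠ 0 := div_ne_zero (mul_ne_zero two_ne_zero hJ) hn'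
  have hcrit := h.criticalRec (ψ := fun l => ((2 * J / n) ^ l)⁻¹ • φ l) hn' hJ
    fun l => (smul_inv_smul₀ (pow_ne_zero l hu) (φ l)).symm
  have hν : ∀ j : ℕ, (n : ℂ) + 2 * j ≠ 0 := fun j => by
    exact_mod_cast (by omega : n + 2 * j ≠ 0)
  have := hcrit.prodSubSquares_apply_eq_zero hν hN
  rw [pow_zero, inv_one, one_smul] at this
  -- the statement multiplies over the list `List.range N` coerced to `List ℂ`
  simp only [List.pure_def, List.bind_eq_flatMap, ← List.map_eq_flatMap, List.map_map,
    Function.comp_def]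
  exact this
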